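/- For the uniform noising process on X = [S]^d with stationary distribution p_0 = Unif(X), the function φ(t) := (1/S) E_{x ~ q_t}[ Σ_{y: ham(y,x)=1} (-log s_t(y,x)) ] equals the negative time-derivative of KL(q_t || p_0); moreover φ(t) = (1/S) Σ_{i∈[d]} Σ_{c∈[S]} KL(q_t || (N_{i,c})_# q_t) ≥ 0, where N_{i,c}(x) = x ⊕_i c shifts coordinate i by c mod S. -/

import Mathlib

open Finset

/-- Hamming distance on `[S]^d`. -/
def hamm {S d : ℕ} (x y : Fin d → Fin S) : ℕ :=
  (Finset.univ.filter fun i => x i ≠ y i).card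

/-- Kullback–Leibler divergence between two probability mass functions on a finite type. -/
noncomputable def klFin {α : Type*} [Fintype α] (p q : α → ℝ) : ℝ :=
  ∑ x, p x * Real.log (p x / q x)

/-- The bijection `N_{i,c}` shifting the `i`-th coordinate by `c` modulo `S`. -/
def Nshift {S d : ℕ} [NeZero S] (i : Fin d) (c : Fin S) (x : Fin d → Fin S) :
    Fin d → Fin S :=
  fun j => if j = i then x i + c else x j

/-- The pushforward `(N_{i,c})_# q`, i.e. `x ↦ q(N_{i,c}⁻¹ x) = q(N_{i,-c} x)`. -/
noncomputable def pushN {S d : ℕ} [NeZero S] (q : (Fin d → Fin S) → ℝ)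
    (i : Fin d) (c : Fin S) : (Fin d → Fin S) → ℝ :=
  fun x => q (Nshift i (-c) x)

/-- `φ(t) = (1/S) E_{x~q_t}[ ∑_{y : ham(y,x)=1} (-log s_t(y,x)) ]` with
`s_t(y,x) = q_t(y)/q_t(x)`. -/
noncomputable def phiUnif {S d : ℕ} (q : (Fin d → Fin S) → ℝ) : ℝ :=
  (1 / (S : ℝ)) * ∑ x, q x *
    ∑ y ∈ Finset.univ.filter (fun y => hamm y x = 1), (-(Real.log (q y / q x)))

/-!
Because total mass is conserved, `d/dt KL(q_t ‖ Unif) = ∑ₓ (L q_t)(x) log q_t(x)` for the generator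
`L` of the noising process. Writing `(L q)(x) = (1/S) ∑_{y ~ x} (q(y) - q(x))` and using the symmetry
of the Hamming-neighbour relation, this equals `(1/S) ∑ₓ ∑_{y ~ x} q(x) log (q(y) / q(x)) = -φ`.
The neighbours of `x` are exactly the points `N_{i,c} x` with `c ≠ 0`, so regrouping by `(i, c)` turns
`φ` into the sum of the `KL(q ‖ (N_{i,c})_# q)` (the `c = 0` terms vanish), and Gibbs' inequality
gives `φ ≥ 0`.
-/

section KullbackLeibler

variable {α : Type*} [Fintype α]

lemma sum_deriv_eq_zero_of_sum_const {p : ℝ → α → ℝ} {p' : α → ℝ} {t C : ℝ}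
    (hp : ∀ x, HasDerivAt (fun s => p s x) (p' x) t) (hsum : ∀ s, ∑ x, p s x = C) :
    ∑ x, p' x = 0 := by
  have h : HasDerivAt (fun s => ∑ x, p s x) (∑ x, p' x) t := HasDerivAt.fun_sum fun x _ => hp x
  simp_rw [hsum] at h
  exact h.unique (hasDerivAt_const t C)

lemma klFin_self (p : α → ℝ) : klFin p p = 0 :=
  Finset.sum_eq_zero fun x _ => by by_cases h : p x = 0 <;> simp [h]

lemma klFin_nonneg {p r : α → ℝ} (hp : ∀ x, 0 < p x) (hr : ∀ x, 0 < r x)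
    (hsum : ∑ x, r x ≤ ∑ x, p x) : 0 ≤ klFin p r := by
  have hterm : ∀ x, p x - r x ≤ p x * Real.log (p x / r x) := fun x => by
    have h := mul_le_mul_of_nonneg_left
      (Real.one_sub_inv_le_log_of_pos (div_pos (hp x) (hr x))) (hp x).le
    rwa [inv_div, mul_sub, mul_one, mul_div_cancel₀ _ (hp x).ne'] at h
  calc 0 ≤ ∑ x, (p x - r x) := by rw [sum_sub_distrib]; linarith
    _ ≤ klFin p r := sum_le_sum fun x _ => hterm x

lemma hasDerivAt_klFin {p : ℝ → α → ℝ} {p' r : α → ℝ} {t : ℝ}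
    (hp : ∀ x, HasDerivAt (fun s => p s x) (p' x) t) (hpos : ∀ x, 0 < p t x)
    (hr : ∀ x, r x ≠ 0) :
    HasDerivAt (fun s => klFin (p s) r) (∑ x, p' x * (Real.log (p t x / r x) + 1)) t := by
  refine HasDerivAt.fun_sum fun x _ => ?_
  have hlog := ((hp x).div_const (r x)).log (div_ne_zero (hpos x).ne' (hr x))
  refine ((hp x).fun_mul hlog).congr_deriv ?_
  rw [div_div_div_cancel_right₀ (hr x), mul_div_cancel₀ _ (hpos x).ne']
  ring

lemma hasDerivAt_klFin_const {p : ℝ → α → ℝ} {p' : α → ℝ} {t c : ℝ}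
    (hp : ∀ x, HasDerivAt (fun s => p s x) (p' x) t) (hpos : ∀ x, 0 < p t x)
    (hc : c ≠ 0) (hp' : ∑ x, p' x = 0) :
    HasDerivAt (fun s => klFin (p s) fun _ => c) (∑ x, p' x * Real.log (p t x)) t := by
  convert hasDerivAt_klFin hp hpos (fun _ => hc) using 1
  have hlog : ∀ x, Real.log (p t x / c) = Real.log (p t x) - Real.log c := fun x =>
    Real.log_div (hpos x).ne' hc
  simp_rw [hlog, mul_add, mul_sub, mul_one, sum_add_distrib, sum_sub_distrib, ← sum_mul, hp']
  ring

end KullbackLeibler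

section Shift

variable {S d : ℕ} [NeZero S]

@[simp]
lemma Nshift_zero (i : Fin d) (x : Fin d → Fin S) : Nshift i 0 x = x := by
  funext j; by_cases h : j = i <;> simp [Nshift, h]

@[simp]
lemma Nshift_Nshift_neg (i : Fin d) (c : Fin S) (x : Fin d → Fin S) :
    Nshift i c (Nshift i (-c) x) = x := by
  funext j; by_cases h : j = i <;> simp [Nshift, h]

lemma Nshift_bijective (i : Fin d) (c : Fin S) :
    Function.Bijective (Nshift (S := S) i c) :=
  Function.bijective_iff_has_inverse.mpr
    ⟨Nshift i (-c), fun x => by simpa using Nshift_Nshift_neg i (-c) x, Nshift_Nshift_neg i c⟩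

lemma sum_pushN (q : (Fin d → Fin S) → ℝ) (i : Fin d) (c : Fin S) :
    ∑ x, pushN q i c x = ∑ x, q x :=
  (Nshift_bijective i (-c)).sum_comp q

lemma filter_Nshift_ne {c : Fin S} (hc : c ≠ 0) (i : Fin d) (x : Fin d → Fin S) :
    univ.filter (fun j => Nshift i c x j ≠ x j) = {i} := by
  ext j; by_cases h : j = i <;> simp [Nshift, h, hc]

lemma hamm_Nshift_self {c : Fin S} (hc : c ≠ 0) (i : Fin d) (x : Fin d → Fin S) :
    hamm (Nshift i c x) x = 1 := by
  rw [hamm, filter_Nshift_ne hc, card_singleton]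

lemma Nshift_inj {c c' : Fin S} (hc : c ≠ 0) {i i' : Fin d} {x : Fin d → Fin S}
    (h : Nshift i c x = Nshift i' c' x) : i = i' ∧ c = c' := by
  have hi := congrFun h i
  by_cases hii : i = i'
  · subst hii
    simpa [Nshift] using hi
  · simp [Nshift, hii, hc] at hi

lemma exists_Nshift_of_hamm_eq_one {x y : Fin d → Fin S} (h : hamm y x = 1) :
    ∃ i, ∃ c ≠ 0, Nshift i c x = y := by
  obtain ⟨i, hi⟩ := card_eq_one.mp h
  have hdiff : ∀ j, y j ≠ x j ↔ j = i := fun j => by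
    simpa using congrArg (j ∈ ·) hi
  refine ⟨i, y i - x i, sub_ne_zero.mpr ((hdiff i).mpr rfl), funext fun j => ?_⟩
  by_cases hj : j = i
  · subst hj; simp [Nshift]
  · simpa [Nshift, hj, eq_comm] using (hdiff j).not.mpr hj

end Shift

local notation "𝒩" x:max => Finset.univ.filter (fun y => hamm y x = 1)

section Neighbors

variable {S d : ℕ}

lemma hamm_comm (x y : Fin d → Fin S) : hamm x y = hamm y x := by
  simp only [hamm, ne_comm]

lemma sum_neighbors_comm {M : Type*} [AddCommMonoid M]
    (F : (Fin d → Fin S) → (Fin d → Fin S) → M) :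
    ∑ x, ∑ y ∈ 𝒩 x, F x y = ∑ x, ∑ y ∈ 𝒩 x, F y x := by
  simp only [sum_filter]
  rw [sum_comm]
  simp only [hamm_comm]

variable [NeZero S]

lemma sum_neighbors {M : Type*} [AddCommMonoid M] (x : Fin d → Fin S)
    (g : (Fin d → Fin S) → M) :
    ∑ y ∈ 𝒩 x, g y = ∑ i, ∑ c ∈ univ.erase 0, g (Nshift i c x) := by
  rw [← sum_product']
  refine (sum_bij (fun p _ => Nshift p.1 p.2 x) ?_ ?_ ?_ fun _ _ => rfl).symm
  · rintro ⟨i, c⟩ hc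
    simpa using hamm_Nshift_self (mem_erase.mp (mem_product.mp hc).2).1 i x
  · rintro ⟨i, c⟩ hc ⟨i', c'⟩ - h
    obtain ⟨rfl, rfl⟩ := Nshift_inj (mem_erase.mp (mem_product.mp hc).2).1 h
    rfl
  · intro y hy
    obtain ⟨i, c, hc, rfl⟩ := exists_Nshift_of_hamm_eq_one (mem_filter.mp hy).2
    exact ⟨(i, c), by simpa using hc, rfl⟩

lemma card_neighbors (x : Fin d → Fin S) : ((𝒩 x).card : ℝ) = d * (S - 1) := by
  rw [card_eq_sum_ones, Nat.cast_sum, sum_neighbors x]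
  simp only [Nat.cast_one, sum_const, mem_univ, card_erase_of_mem, card_univ,
    Fintype.card_fin, nsmul_eq_mul, Nat.cast_sub NeZero.one_le, mul_one]

end Neighbors

section Generator

variable {S d : ℕ}

noncomputable def unifGenerator (q : (Fin d → Fin S) → ℝ) (x : Fin d → Fin S) : ℝ :=
  (1 / (S : ℝ)) * ∑ y ∈ 𝒩 x, q y - ((d : ℝ) * ((S : ℝ) - 1) / (S : ℝ)) * q x

variable [NeZero S]

lemma unifGenerator_eq_sum_sub (q : (Fin d → Fin S) → ℝ) (x : Fin d → Fin S) :
    unifGenerator q x = (1 / (S : ℝ)) * ∑ y ∈ 𝒩 x, (q y - q x) := by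
  rw [unifGenerator, sum_sub_distrib, sum_const, nsmul_eq_mul, card_neighbors]
  ring

lemma sum_unifGenerator_mul_log {q : (Fin d → Fin S) → ℝ} (hq : ∀ x, 0 < q x) :
    ∑ x, unifGenerator q x * Real.log (q x) = -phiUnif q := by
  have hlog : ∀ x y, Real.log (q y / q x) = Real.log (q y) - Real.log (q x) := fun x y =>
    Real.log_div (hq y).ne' (hq x).ne'
  calc ∑ x, unifGenerator q x * Real.log (q x)
      = (1 / (S : ℝ)) * ∑ x, ∑ y ∈ 𝒩 x, (q y - q x) * Real.log (q x) := by
        simp_rw [unifGenerator_eq_sum_sub, mul_assoc, sum_mul, ← mul_sum]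
    _ = (1 / (S : ℝ)) * ∑ x, ∑ y ∈ 𝒩 x, q x * (Real.log (q y) - Real.log (q x)) := by
        simp_rw [sub_mul, mul_sub, sum_sub_distrib]
        rw [sum_neighbors_comm fun x y => q y * Real.log (q x)]
    _ = -phiUnif q := by
        simp only [phiUnif, ← hlog, mul_sum, sum_neg_distrib, mul_neg, neg_neg]

@[simp]
lemma pushN_zero (q : (Fin d → Fin S) → ℝ) (i : Fin d) : pushN q i 0 = q := by
  funext x; simp [pushN]

lemma sum_klFin_pushN (q : (Fin d → Fin S) → ℝ) (i : Fin d) :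
    ∑ c, klFin q (pushN q i c)
      = ∑ c ∈ univ.erase 0, ∑ x, q x * Real.log (q x / q (Nshift i c x)) := by
  rw [← Equiv.sum_comp (Equiv.neg (Fin S))]
  simp only [Equiv.neg_apply]
  rw [← sum_erase univ (f := fun c => klFin q (pushN q i (-c))) (a := 0) (by simp [klFin_self])]
  simp [klFin, pushN]

lemma phiUnif_eq_sum_klFin_pushN (q : (Fin d → Fin S) → ℝ) :
    phiUnif q = (1 / (S : ℝ)) * ∑ i, ∑ c, klFin q (pushN q i c) := by
  have hlog : ∀ x y, -Real.log (q y / q x) = Real.log (q x / q y) := fun x y => by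
    rw [← Real.log_inv, inv_div]
  rw [phiUnif]
  congr 1
  simp_rw [sum_klFin_pushN, hlog, mul_sum, sum_neighbors]
  rw [sum_comm]
  exact sum_congr rfl fun _ _ => sum_comm

end Generator

/-- For the uniform noising process on `[S]^d` (marginals `q_t` solving the Kolmogorov
forward equation) with stationary distribution `p_0 = Unif([S]^d)`, the function
`φ(t) = (1/S) E_{x~q_t} ∑_{ham(y,x)=1} (-log s_t(y,x))` equals the negative time-derivative
of `KL(q_t ‖ p_0)`; moreover `φ(t) = (1/S) ∑_{i∈[d]} ∑_{c∈[S]} KL(q_t ‖ (N_{i,c})_# q_t) ≥ 0`. -/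
theorem phiUnif_eq_neg_deriv_KL (S d : ℕ) [NeZero S]
    (q : ℝ → (Fin d → Fin S) → ℝ)
    (hsum : ∀ t, ∑ x, q t x = 1)
    (hpos : ∀ t, 0 < t → ∀ x, 0 < q t x)
    (hkol : ∀ t x, HasDerivAt (fun s => q s x)
        ((1 / (S : ℝ)) * ∑ y ∈ Finset.univ.filter (fun y => hamm y x = 1), q t y
          - ((d : ℝ) * ((S : ℝ) - 1) / (S : ℝ)) * q t x) t)
    (t : ℝ) (ht : 0 < t) :
    HasDerivAt (fun s => klFin (q s) (fun _ => 1 / ((S : ℝ) ^ d)))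
        (-(phiUnif (q t))) t ∧
    phiUnif (q t)
      = (1 / (S : ℝ)) * ∑ i : Fin d, ∑ c : Fin S, klFin (q t) (pushN (q t) i c) ∧
    0 ≤ phiUnif (q t) := by
  have hq := hpos t ht
  have hgen : ∀ x, HasDerivAt (fun s => q s x) (unifGenerator (q t) x) t := hkol t
  refine ⟨?_, phiUnif_eq_sum_klFin_pushN (q t), ?_⟩
  · rw [← sum_unifGenerator_mul_log hq]
    exact hasDerivAt_klFin_const hgen hq (by simp [NeZero.ne S])
      (sum_deriv_eq_zero_of_sum_const hgen hsum)
  · rw [phiUnif_eq_sum_klFin_pushN]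
    refine mul_nonneg (by positivity) (sum_nonneg fun i _ => sum_nonneg fun c _ => ?_)
    exact klFin_nonneg hq (fun _ => hq _) (by rw [sum_pushN])
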